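/- Every graph automorphism φ of the triangular grid graph G_T is an affine map: there exist an orthogonal linear map A of ℝ² with A(L) = L and a vector b ∈ L such that φ(x) = A·x + b for all x ∈ L. In particular every automorphism of G_T extends to an isometry of the Euclidean plane, namely a translation, a rotation by a multiple of 60°, a reflection, or a glide reflection. -/

import Mathlib

/-!
In the coordinates `(a, b) ↦ a • (1, 0) + b • (1/2, √3/2)`, an automorphism `ψ` of the grid maps
a unit triangle `p, p + u, p + v` to a unit triangle. The edge `{p + u, p + v}` has exactly two
common neighbours, `p` and `p + u + v`, so `ψ (p + u + v) + ψ p = ψ (p + u) + ψ (p + v)`. These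
parallelogram identities make the first differences of `ψ` periodic in two independent
directions, hence constant, so `ψ` is affine and its linear part sends the sides of a unit
triangle to the sides of a unit triangle. Transported to the plane, such a linear map preserves
the Gram matrix of the basis `(1, 0), (1/2, √3/2)`, so it is orthogonal.
-/

/-- The triangular lattice `L = {a·(1,0) + b·(1/2,√3/2) : a, b ∈ ℤ} ⊆ ℝ²`. -/
def triLat : Set (ℝ × ℝ) :=
  {x | ∃ a b : ℤ, x = (a : ℝ) • ((1 : ℝ), (0 : ℝ)) + (b : ℝ) • ((1/2 : ℝ), Real.sqrt 3 / 2)}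

/-- The triangular grid graph `G_T`: vertex set the triangular lattice, with two
vertices adjacent iff their Euclidean distance is 1. -/
def GT : SimpleGraph triLat where
  Adj x y := ((x : ℝ × ℝ).1 - (y : ℝ × ℝ).1) ^ 2 + ((x : ℝ × ℝ).2 - (y : ℝ × ℝ).2) ^ 2 = 1
  symm := by
    constructor
    intro x y h
    rw [← h]; ring
  loopless := by
    constructor
    intro x h
    simp at h

open Function

/-- The six unit vectors of the triangular lattice, in the coordinates
`(a, b) ↦ a • (1, 0) + b • (1/2, √3/2)`. -/
def triUnits : Finset (ℤ × ℤ) := {(1, 0), (0, 1), (-1, 1), (-1, 0), (0, -1), (1, -1)}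

def triNormSq (d : ℤ × ℤ) : ℤ := d.1 ^ 2 + d.1 * d.2 + d.2 ^ 2

theorem triNormSq_eq_one_iff (d : ℤ × ℤ) : triNormSq d = 1 ↔ d ∈ triUnits := by
  obtain ⟨a, b⟩ := d
  refine ⟨fun h => ?_, fun h => by fin_cases h <;> rfl⟩
  simp only [triNormSq] at h
  have ha : |a| ≤ 1 := (sq_le_one_iff_abs_le_one a).mp (by nlinarith [sq_nonneg (a + 2 * b)])
  have hb : |b| ≤ 1 := (sq_le_one_iff_abs_le_one b).mp (by nlinarith [sq_nonneg (2 * a + b)])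
  rcases Int.abs_le_one_iff.mp ha with rfl | rfl | rfl <;>
    rcases Int.abs_le_one_iff.mp hb with rfl | rfl | rfl <;> simp_all [triUnits]

theorem neg_mem_triUnits : ∀ d ∈ triUnits, -d ∈ triUnits := by decide

theorem add_ne_zero_of_sub_mem_triUnits :
    ∀ u ∈ triUnits, ∀ v ∈ triUnits, u - v ∈ triUnits → u + v ≠ 0 := by decide

theorem triLattice_common_neighbor_eq {P U V X : ℤ × ℤ} (hU : U - P ∈ triUnits)
    (hV : V - P ∈ triUnits) (hUV : U - V ∈ triUnits) (hXU : X - U ∈ triUnits)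
    (hXV : X - V ∈ triUnits) :
    X = P ∨ X = U + V - P := by
  have key : ∀ U ∈ triUnits, ∀ V ∈ triUnits, U - V ∈ triUnits → ∀ W ∈ triUnits,
      U + W - V ∈ triUnits → U + W = 0 ∨ U + W = U + V := by decide
  have := key (U - P) hU (V - P) hV (by simpa using hUV) (X - U) hXU (by simpa using hXV)
  rcases this with h | h
  exacts [.inl (by linear_combination h), .inr (by linear_combination h)]

def triLatticeGraph : SimpleGraph (ℤ × ℤ) where
  Adj p q := p - q ∈ triUnits
  symm := ⟨fun p q h => by simpa using neg_mem_triUnits _ h⟩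
  loopless := ⟨fun p h => (by decide : (0 : ℤ × ℤ) ∉ triUnits) (by simpa using h)⟩

theorem triLattice_embedding_parallelogram (ψ : triLatticeGraph ↪g triLatticeGraph) (p : ℤ × ℤ)
    {u v : ℤ × ℤ} (hu : u ∈ triUnits) (hv : v ∈ triUnits) (huv : u - v ∈ triUnits) :
    ψ (p + u + v) + ψ p = ψ (p + u) + ψ (p + v) := by
  have adj : ∀ x y, x - y ∈ triUnits → ψ x - ψ y ∈ triUnits := fun x y h =>
    ψ.map_adj_iff.mpr (show triLatticeGraph.Adj x y from h)
  rcases triLattice_common_neighbor_eq (adj (p + u) p (by simpa using hu))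
    (adj (p + v) p (by simpa using hv)) (adj (p + u) (p + v) (by simpa using huv))
    (adj (p + u + v) (p + u) (by simpa using hv))
    (adj (p + u + v) (p + v) (by simpa [add_right_comm] using hu)) with h | h
  · refine absurd (ψ.injective h) ?_
    simpa [add_assoc] using add_ne_zero_of_sub_mem_triUnits u hu v hv huv
  · rw [h]; abel

theorem apply_eq_apply_zero_of_periodic {β : Type*} {g : ℤ × ℤ → β} (h₁ : Periodic g (1, 0))
    (h₂ : Periodic g (0, 1)) (p : ℤ × ℤ) : g p = g 0 := by
  have hp : p = 0 + p.1 • ((1 : ℤ), (0 : ℤ)) + p.2 • ((0 : ℤ), (1 : ℤ)) := by ext <;> simp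
  rw [hp, h₂.zsmul, h₁.zsmul]

section Parallelogram

variable {α : Type*} [AddCommGroup α] {f : ℤ × ℤ → α}

theorem periodic_sub_of_parallelogram {u v : ℤ × ℤ}
    (h : ∀ p, f (p + u + v) + f p = f (p + u) + f (p + v)) :
    Periodic (fun p => f (p + u) - f p) v := fun p => by
  rw [sub_eq_sub_iff_add_eq_add, add_right_comm, h]

theorem eq_affine_of_parallelogram
    (h : ∀ p, ∀ u ∈ triUnits, ∀ v ∈ triUnits, u - v ∈ triUnits →
      f (p + u + v) + f p = f (p + u) + f (p + v)) (p : ℤ × ℤ) :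
    f p = p.1 • (f (1, 0) - f 0) + p.2 • (f (0, 1) - f 0) + f 0 := by
  have hper : ∀ u ∈ triUnits, ∀ v ∈ triUnits, u - v ∈ triUnits →
      Periodic (fun p => f (p + u) - f p) v := fun u hu v hv huv =>
    periodic_sub_of_parallelogram (h · u hu v hv huv)
  have hD₁ : ∀ p, f (p + (1, 0)) - f p = f (1, 0) - f 0 := by
    have h₂ := hper (1, 0) (by decide) (0, 1) (by decide) (by decide)
    have h₁ : Periodic (fun p => f (p + (1, 0)) - f p) (1, 0) := by
      simpa using (hper (1, 0) (by decide) (1, -1) (by decide) (by decide)).add_period h₂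
    simpa using apply_eq_apply_zero_of_periodic h₁ h₂
  have hD₂ : ∀ p, f (p + (0, 1)) - f p = f (0, 1) - f 0 := by
    have h₁ := hper (0, 1) (by decide) (1, 0) (by decide) (by decide)
    have h₂ : Periodic (fun p => f (p + (0, 1)) - f p) (0, 1) := by
      simpa using (hper (0, 1) (by decide) (-1, 1) (by decide) (by decide)).add_period h₁
    simpa using apply_eq_apply_zero_of_periodic h₁ h₂
  set c₁ := f (1, 0) - f 0
  set c₂ := f (0, 1) - f 0
  have hg := apply_eq_apply_zero_of_periodic (g := fun p : ℤ × ℤ => f p - (p.1 • c₁ + p.2 • c₂))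
    (fun p => by
      simp only [Prod.fst_add, Prod.snd_add, add_smul, one_smul, zero_smul, ← hD₁ p]; abel)
    (fun p => by
      simp only [Prod.fst_add, Prod.snd_add, add_smul, one_smul, zero_smul, ← hD₂ p]; abel)
    p
  simpa [sub_eq_iff_eq_add, add_comm] using hg

end Parallelogram

theorem triLattice_embedding_eq_affine (ψ : triLatticeGraph ↪g triLatticeGraph) (p : ℤ × ℤ) :
    ψ p = p.1 • (ψ (1, 0) - ψ 0) + p.2 • (ψ (0, 1) - ψ 0) + ψ 0 :=
  eq_affine_of_parallelogram
    (fun p _ hu _ hv huv => triLattice_embedding_parallelogram ψ p hu hv huv) p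

noncomputable def triEmb : ℤ × ℤ →+ ℝ × ℝ :=
  AddMonoidHom.mk' (fun p => (p.1 : ℝ) • ((1 : ℝ), (0 : ℝ)) + (p.2 : ℝ) • ((1 / 2 : ℝ), √3 / 2))
    (fun p q => by simp only [Prod.fst_add, Prod.snd_add, Int.cast_add, add_smul]; abel)

theorem triEmb_apply (p : ℤ × ℤ) : triEmb p = ((p.1 : ℝ) + p.2 / 2, p.2 * (√3 / 2)) := by
  simp [triEmb, div_eq_mul_inv]

theorem range_triEmb : Set.range triEmb = triLat := by
  ext x
  simp only [Set.mem_range, Prod.exists]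
  exact exists₂_congr fun a b => eq_comm

theorem triEmb_mem (p : ℤ × ℤ) : triEmb p ∈ triLat := range_triEmb ▸ Set.mem_range_self p

theorem triEmb_fst_sq_add_snd_sq (d : ℤ × ℤ) :
    (triEmb d).1 ^ 2 + (triEmb d).2 ^ 2 = triNormSq d := by
  have h3 : √3 ^ 2 = 3 := Real.sq_sqrt (by norm_num)
  simp only [triEmb_apply, triNormSq]
  push_cast
  linear_combination ((d.2 : ℝ) ^ 2 / 4) * h3

theorem triEmb_injective : Injective triEmb := by
  refine (injective_iff_map_eq_zero triEmb).mpr fun p hp => ?_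
  rw [triEmb_apply, Prod.mk_eq_zero] at hp
  obtain ⟨h₁, h₂⟩ := hp
  have hb : p.2 = 0 := by exact_mod_cast (mul_eq_zero.mp h₂).resolve_right (by positivity)
  have ha : p.1 = 0 := by simpa [hb] using h₁
  ext <;> assumption

noncomputable def triLatticeIsoGT : triLatticeGraph ≃g GT where
  toEquiv := Equiv.ofBijective (fun p => ⟨triEmb p, triEmb_mem p⟩)
    ⟨fun p q h => triEmb_injective (congrArg Subtype.val h), fun x => by
      obtain ⟨p, hp⟩ : (x : ℝ × ℝ) ∈ Set.range triEmb := by rw [range_triEmb]; exact x.2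
      exact ⟨p, Subtype.ext hp⟩⟩
  map_rel_iff' {p q} := by
    change ((triEmb p).1 - (triEmb q).1) ^ 2 + ((triEmb p).2 - (triEmb q).2) ^ 2 = 1 ↔
      p - q ∈ triUnits
    rw [← Prod.fst_sub, ← Prod.snd_sub, ← map_sub, triEmb_fst_sq_add_snd_sq,
      ← triNormSq_eq_one_iff]
    exact_mod_cast Iff.rfl

/-- The matrix sending `(1, 0) ↦ s` and `(1/2, √3/2) ↦ t`. -/
noncomputable def triBasisMatrix (s t : ℝ × ℝ) : Matrix (Fin 2) (Fin 2) ℝ :=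
  !![s.1, (2 * t.1 - s.1) / √3; s.2, (2 * t.2 - s.2) / √3]

def mulVecProd (A : Matrix (Fin 2) (Fin 2) ℝ) (x : ℝ × ℝ) : ℝ × ℝ :=
  (A 0 0 * x.1 + A 0 1 * x.2, A 1 0 * x.1 + A 1 1 * x.2)

theorem mulVecProd_triBasisMatrix_triEmb (s t : ℝ × ℝ) (p : ℤ × ℤ) :
    mulVecProd (triBasisMatrix s t) (triEmb p) = (p.1 : ℝ) • s + (p.2 : ℝ) • t := by
  have h3 : √3 ≠ 0 := by positivity
  simp only [mulVecProd, triBasisMatrix, triEmb_apply]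
  ext <;> simp <;> field_simp <;> ring

theorem triBasisMatrix_transpose_mul_self {s t : ℝ × ℝ} (hs : s.1 ^ 2 + s.2 ^ 2 = 1)
    (ht : t.1 ^ 2 + t.2 ^ 2 = 1) (hst : (s.1 - t.1) ^ 2 + (s.2 - t.2) ^ 2 = 1) :
    (triBasisMatrix s t).transpose * triBasisMatrix s t = 1 := by
  have h3 : √3 ^ 2 = 3 := Real.sq_sqrt (by norm_num)
  have h3' : √3 ≠ 0 := by positivity
  ext i j
  fin_cases i <;> fin_cases j <;>
    simp [triBasisMatrix, Matrix.mul_apply, Fin.sum_univ_two] <;> field_simp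
  · exact hs
  · linear_combination ht - hst
  · linear_combination ht - hst
  · linear_combination 2 * ht - hs + 2 * hst - h3

theorem mulVecProd_image_triLat {A : Matrix (Fin 2) (Fin 2) ℝ} {g : ℤ × ℤ → ℤ × ℤ}
    (hg : Surjective g) (hA : ∀ p, mulVecProd A (triEmb p) = triEmb (g p)) :
    mulVecProd A '' triLat = triLat := by
  rw [← range_triEmb, ← Set.range_comp, show mulVecProd A ∘ triEmb = triEmb ∘ g from funext hA,
    Set.range_comp, hg.range_eq, Set.image_univ]

theorem triBasisMatrix_triEmb_transpose_mul_self {c₁ c₂ : ℤ × ℤ} (h₁ : c₁ ∈ triUnits)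
    (h₂ : c₂ ∈ triUnits) (h₁₂ : c₁ - c₂ ∈ triUnits) :
    (triBasisMatrix (triEmb c₁) (triEmb c₂)).transpose * triBasisMatrix (triEmb c₁) (triEmb c₂)
      = 1 := by
  have hunit : ∀ d ∈ triUnits, (triEmb d).1 ^ 2 + (triEmb d).2 ^ 2 = 1 := fun d hd => by
    rw [triEmb_fst_sq_add_snd_sq, (triNormSq_eq_one_iff d).mpr hd, Int.cast_one]
  refine triBasisMatrix_transpose_mul_self (hunit _ h₁) (hunit _ h₂) ?_
  simpa only [map_sub, Prod.fst_sub, Prod.snd_sub] using hunit _ h₁₂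

/-- Every graph automorphism of the triangular grid graph is affine: it is
given by `x ↦ A·x + b` for an orthogonal linear map `A` of `ℝ²` with `A(L) = L` and a
vector `b ∈ L`. (In particular it extends to an isometry of the Euclidean plane: a
translation, a rotation by a multiple of 60°, a reflection, or a glide reflection.) -/
theorem triangular_grid_automorphism_affine (φ : GT ≃g GT) :
    ∃ A : Matrix (Fin 2) (Fin 2) ℝ,
      A.transpose * A = 1 ∧
      (fun p : ℝ × ℝ => (A 0 0 * p.1 + A 0 1 * p.2, A 1 0 * p.1 + A 1 1 * p.2)) ''
          triLat = triLat ∧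
      ∃ b ∈ triLat, ∀ x : triLat,
        ((φ x : ℝ × ℝ)) =
          (A 0 0 * (x : ℝ × ℝ).1 + A 0 1 * (x : ℝ × ℝ).2 + b.1,
           A 1 0 * (x : ℝ × ℝ).1 + A 1 1 * (x : ℝ × ℝ).2 + b.2) := by
  set e := triLatticeIsoGT
  set ψ : triLatticeGraph ≃g triLatticeGraph := (e.trans φ).trans e.symm
  have hφ : ∀ p, φ (e p) = e (ψ p) := fun p => by simp [ψ]
  have hadj : ∀ {p q}, p - q ∈ triUnits → ψ p - ψ q ∈ triUnits := fun h => ψ.map_adj_iff.mpr h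
  have hψ : ∀ p, ψ p = p.1 • (ψ (1, 0) - ψ 0) + p.2 • (ψ (0, 1) - ψ 0) + ψ 0 :=
    triLattice_embedding_eq_affine ψ.toEmbedding
  set A := triBasisMatrix (triEmb (ψ (1, 0) - ψ 0)) (triEmb (ψ (0, 1) - ψ 0))
  have hA : ∀ p, mulVecProd A (triEmb p) = triEmb (ψ p - ψ 0) := fun p => by
    rw [mulVecProd_triBasisMatrix_triEmb, hψ p, add_sub_cancel_right, map_add, map_zsmul,
      map_zsmul, Int.cast_smul_eq_zsmul, Int.cast_smul_eq_zsmul]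
  refine ⟨A, triBasisMatrix_triEmb_transpose_mul_self (hadj (by decide)) (hadj (by decide))
    (by simpa using hadj (by decide)), ?_, triEmb (ψ 0), triEmb_mem _, fun x => ?_⟩
  · exact mulVecProd_image_triLat (fun q => ⟨ψ.symm (q + ψ 0), by simp⟩) hA
  · obtain ⟨p, rfl⟩ := e.surjective x
    change ((φ (e p) : triLat) : ℝ × ℝ) = mulVecProd A (triEmb p) + triEmb (ψ 0)
    rw [hφ, hA, ← map_add, sub_add_cancel]
    rfl
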